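/- arXiv:1707.04160 — 2 statements merged into one kernel-verified Lean document; each statement's English description precedes it below -/
import Mathlib

section
/- Let S be a finite type and f : S → Bool → S. There exists a word w such that for every state s ∈ S, the state s · w belongs to some leaf connected component. -/
open MeasureTheory Filter

/-- The fair-coin product probability measure on Cantor space `ℕ → Bool`,
constructed as the pushforward of Lebesgue measure on `[0,1)` under binary expansion. -/
noncomputable def mu : Measure (ℕ → Bool) :=
  Measure.map (fun x n => decide (⌊x * 2 ^ (n + 1)⌋ % 2 = 1))
    (volume.restrict (Set.Ico (0 : ℝ) 1))

/-- Action of a word on a state of an automaton. -/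
def act {S A : Type*} (f : S → A → S) (s : S) (w : List A) : S := w.foldl f s

/-- The run of a sequence `X` on the machine `(S, f, s₀)`. -/
def run {S : Type*} (f : S → Bool → S) (s₀ : S) (X : ℕ → Bool) : ℕ → S
  | 0 => s₀
  | n + 1 => f (run f s₀ X n) (X n)

/-- `t` is reachable from `s`. -/
def Reach {S : Type*} (f : S → Bool → S) (s t : S) : Prop := ∃ w : List Bool, act f s w = t

/-- The connected component of a state `s`. -/
def component {S : Type*} (f : S → Bool → S) (s : S) : Set S :=
  {t | Reach f s t ∧ Reach f t s}

/-- `g` is a leaf connected component. -/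
def IsLeafComponent {S : Type*} (f : S → Bool → S) (g : Set S) : Prop :=
  (∃ s, g = component f s) ∧ ∀ s ∈ g, ∀ t, Reach f s t → Reach f t s

/-- The word `w` occurs as a subword of the sequence `X`. -/
def Occurs (w : List Bool) (X : ℕ → Bool) : Prop :=
  ∃ n, ∀ k < w.length, X (n + k) = w.getD k false

/-- `X` is disjunctive: every word occurs in `X` as a subword. -/
def Disjunctive (X : ℕ → Bool) : Prop := ∀ w : List Bool, Occurs w X

/-- The word `w` is a prefix of the sequence `X`. -/
def IsPrefixOfSeq (w : List Bool) (X : ℕ → Bool) : Prop :=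
  ∀ k < w.length, X k = w.getD k false

/-- `[L]`: the set of sequences having some prefix in the language `L`. -/
def cyl (L : Set (List Bool)) : Set (ℕ → Bool) := {X | ∃ w ∈ L, IsPrefixOfSeq w X}

/-- `I(X)`: the set of states visited infinitely often by the run of `X`. -/
def InfOcc {S : Type*} (f : S → Bool → S) (s₀ : S) (X : ℕ → Bool) : Set S :=
  {s | ∃ᶠ n in atTop, run f s₀ X n = s}

/-- `X` is accepted by the deterministic Büchi automaton `(S, f, s₀, F)`. -/
def BuchiAccepts {S : Type*} (f : S → Bool → S) (s₀ : S) (F : Set S) (X : ℕ → Bool) : Prop :=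
  ∃ᶠ n in atTop, run f s₀ X n ∈ F

/-- A language is regular if it is accepted by a DFA with finitely many states. -/
def Regular {A : Type} (L : Set (List A)) : Prop :=
  ∃ (S : Type) (_ : Fintype S) (f : S → A → S) (s₀ : S) (F : Set S),
    L = {w | act f s₀ w ∈ F}

/-- The convolution of two words. -/
def conv (x i : List Bool) : List (Option Bool × Option Bool) :=
  (List.range (max x.length i.length)).map (fun k => (x[k]?, i[k]?))

/-- `(I, U)` is an automatic family. -/
def IsAutomaticFamily (I : Set (List Bool)) (U : List Bool → Set (List Bool)) : Prop :=
  Regular I ∧ Regular {c | ∃ i ∈ I, ∃ x ∈ U i, c = conv x i}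

/-- `(I, U)` is an automatic randomness test (ART). -/
def IsART (I : Set (List Bool)) (U : List Bool → Set (List Bool)) : Prop :=
  IsAutomaticFamily I U ∧ ∀ ε : ENNReal, 0 < ε → ∃ i ∈ I, mu (cyl (U i)) ≤ ε

/-- `(I, U)` is a Martin-Löf automatic randomness test (MART). -/
def IsMART (I : Set (List Bool)) (U : List Bool → Set (List Bool)) : Prop :=
  IsAutomaticFamily I U ∧ I.Infinite ∧
    ∀ i ∈ I, mu (cyl (U i)) ≤ (2 : ENNReal) ^ (-(i.length : ℤ))

/-- The covering region `F(I, U)` of a test. -/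
def coverRegion (I : Set (List Bool)) (U : List Bool → Set (List Bool)) : Set (ℕ → Bool) :=
  ⋂ i ∈ I, cyl (U i)


lemma act_append {S A : Type*} (f : S → A → S) (s : S) (w1 w2 : List A) :
    act f s (w1 ++ w2) = act f (act f s w1) w2 := by
  simp [act, List.foldl_append]

lemma reach_refl {S : Type*} (f : S → Bool → S) (s : S) : Reach f s s := ⟨[], rfl⟩

lemma reach_trans {S : Type*} {f : S → Bool → S} {s t u : S}
    (h1 : Reach f s t) (h2 : Reach f t u) : Reach f s u := by
  obtain ⟨w1, rfl⟩ := h1; obtain ⟨w2, rfl⟩ := h2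
  exact ⟨w1 ++ w2, act_append f s w1 w2⟩

lemma leaf_of_all {S : Type*} (f : S → Bool → S) (s : S)
    (h : ∀ t, Reach f s t → Reach f t s) : IsLeafComponent f (component f s) := by
  refine ⟨⟨s, rfl⟩, ?_⟩
  rintro s' ⟨hss', hs's⟩ t hs't
  exact reach_trans (h t (reach_trans hss' hs't)) hss'

lemma exists_reach_leaf {S : Type} [Fintype S] (f : S → Bool → S) (s : S) :
    ∃ w : List Bool, ∃ g : Set S, IsLeafComponent f g ∧ act f s w ∈ g := by
  classical
  suffices H : ∀ n (s : S), Set.ncard {t | Reach f s t} ≤ n →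
      ∃ w : List Bool, ∃ g : Set S, IsLeafComponent f g ∧ act f s w ∈ g from
    H _ s le_rfl
  intro n
  induction n with
  | zero =>
    intro s hs
    exfalso
    have : 0 < Set.ncard {t | Reach f s t} :=
      (Set.ncard_pos (Set.toFinite _)).mpr ⟨s, reach_refl f s⟩
    omega
  | succ n ih =>
    intro s hs
    by_cases hc : ∀ t, Reach f s t → Reach f t s
    · exact ⟨[], component f s, leaf_of_all f s hc, reach_refl f s, reach_refl f s⟩
    · push_neg at hc
      obtain ⟨t, hst, hts⟩ := hc
      have hsub : {u | Reach f t u} ⊂ {u | Reach f s u} := by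
        constructor
        · intro u hu; exact reach_trans hst hu
        · intro hle
          exact hts (hle (reach_refl f s))
      have hlt : Set.ncard {u | Reach f t u} < Set.ncard {u | Reach f s u} :=
        Set.ncard_lt_ncard hsub (Set.toFinite _)
      obtain ⟨w, g, hg, hm⟩ := ih t (by omega)
      obtain ⟨w0, hw0⟩ := hst
      exact ⟨w0 ++ w, g, hg, by rw [act_append, hw0]; exact hm⟩

lemma leaf_absorb {S : Type*} {f : S → Bool → S} {g : Set S} {s : S}
    (hg : IsLeafComponent f g) (hs : s ∈ g) (w : List Bool) : act f s w ∈ g := by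
  obtain ⟨⟨s', rfl⟩, hback⟩ := hg
  obtain ⟨hs's, hss'⟩ := hs
  have h1 : Reach f s (act f s w) := ⟨w, rfl⟩
  exact ⟨reach_trans hs's h1, reach_trans (hback s ⟨hs's, hss'⟩ _ h1) hss'⟩

/-- There exists a word `w` such that from every state `s`, the state
`s · w` belongs to some leaf connected component. -/
theorem stmt3 {S : Type} [Fintype S] (f : S → Bool → S) :
    ∃ w : List Bool, ∀ s : S, ∃ g : Set S, IsLeafComponent f g ∧ act f s w ∈ g := by
  classical
  have H : ∀ u : Finset S, ∃ w : List Bool,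
      ∀ s ∈ u, ∃ g : Set S, IsLeafComponent f g ∧ act f s w ∈ g := by
    intro u
    induction u using Finset.induction with
    | empty => exact ⟨[], by simp⟩
    | @insert a u ha ih =>
      obtain ⟨w, hw⟩ := ih
      obtain ⟨w', g, hg, hm⟩ := exists_reach_leaf f (act f a w)
      refine ⟨w ++ w', fun s hs => ?_⟩
      rw [act_append]
      rcases Finset.mem_insert.mp hs with rfl | hs
      · exact ⟨g, hg, hm⟩
      · obtain ⟨g', hg', hm'⟩ := hw s hs
        exact ⟨g', hg', leaf_absorb hg' hm' w'⟩
  obtain ⟨w, hw⟩ := H Finset.univ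
  exact ⟨w, fun s => hw s (Finset.mem_univ s)⟩
end

section
/- For every deterministic Büchi automaton M over Bool with μ(L(M)) = 0, there exists an automatic randomness test (I, U) whose covering region F(I, U) equals L(M). -/
open MeasureTheory Filter

/-! The test is `I = {0,1}*` with `U i` the words of length at least `|i|` on which the automaton
ends in an accepting state. Then `[U i]` is the set of sequences visiting `F` at some time
`≥ |i|`; these sets decrease to `L(M)`, so their measures tend to `μ(L(M)) = 0`, and their
intersection is `L(M)`. The convolutions `conv x i` with `|i| ≤ |x|` are read by running the
automaton on the first component while checking the padding pattern of the second. -/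

section Convolution

@[simp] theorem act_cons {S A : Type*} (f : S → A → S) (s : S) (a : A) (w : List A) :
    act f s (a :: w) = act f (f s a) w := rfl

theorem conv_cons_cons (u v : Bool) (x i : List Bool) :
    conv (u :: x) (v :: i) = (some u, some v) :: conv x i := by
  simp [conv, Nat.succ_max_succ, List.range_succ_eq_map]

theorem conv_cons_nil (u : Bool) (x : List Bool) :
    conv (u :: x) [] = (some u, none) :: conv x [] := by
  simp [conv, List.range_succ_eq_map]

/-- Transition function of an automaton reading `conv x i` with `|i| ≤ |x|`: it runs `f` on `x`,
and the flag records that `i` has run out, after which only letters `(some u, none)` are legal. -/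
def convStep {S : Type*} (f : S → Bool → S) :
    Option (S × Bool) → Option Bool × Option Bool → Option (S × Bool)
  | some (s, false), (some u, some _) => some (f s u, false)
  | some (s, _), (some u, none) => some (f s u, true)
  | _, _ => none

variable {S : Type*} (f : S → Bool → S)

@[simp] theorem act_convStep_none (w : List (Option Bool × Option Bool)) :
    act (convStep f) none w = none := by
  induction w with
  | nil => rfl
  | cons a w ih => simpa [convStep] using ih

@[simp] theorem convStep_some_none (s : S) (b u : Bool) :
    convStep f (some (s, b)) (some u, none) = some (f s u, true) := by
  cases b <;> rfl

theorem act_convStep_conv_nil (x : List Bool) (s : S) (b : Bool) :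
    ∃ b', act (convStep f) (some (s, b)) (conv x []) = some (act f s x, b') := by
  induction x generalizing s b with
  | nil => exact ⟨b, rfl⟩
  | cons u x ih => simpa [conv_cons_nil] using ih (f s u) true

theorem act_convStep_conv {x i : List Bool} (hlen : i.length ≤ x.length) (s : S) :
    ∃ b, act (convStep f) (some (s, false)) (conv x i) = some (act f s x, b) := by
  induction i generalizing x s with
  | nil => exact act_convStep_conv_nil f x s false
  | cons v i ih =>
    obtain _ | ⟨u, x⟩ := x
    · simp at hlen
    · simpa [conv_cons_cons, convStep] using ih (Nat.le_of_succ_le_succ hlen) (f s u)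

theorem eq_conv_of_act_convStep {w : List (Option Bool × Option Bool)} {s t : S} {b b' : Bool}
    (hw : act (convStep f) (some (s, b)) w = some (t, b')) :
    ∃ x i : List Bool, i.length ≤ x.length ∧ (b = true → i = []) ∧
      w = conv x i ∧ t = act f s x := by
  induction w generalizing s b with
  | nil =>
    obtain ⟨rfl, -⟩ := Prod.mk.inj (Option.some.inj hw)
    exact ⟨[], [], le_rfl, fun _ => rfl, rfl, rfl⟩
  | cons a w ih =>
    obtain ⟨_ | u, _ | v⟩ := a
    · simp [convStep] at hw
    · simp [convStep] at hw
    · rw [act_cons, convStep_some_none] at hw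
      obtain ⟨x, i, -, hi, rfl, rfl⟩ := ih hw
      exact ⟨u :: x, [], by simp, fun _ => rfl, by rw [hi rfl, conv_cons_nil], rfl⟩
    · cases b
      · obtain ⟨x, i, hlen, -, rfl, rfl⟩ := ih hw
        exact ⟨u :: x, v :: i, by simpa using hlen, nofun, by rw [conv_cons_cons], rfl⟩
      · simp [convStep] at hw

end Convolution

def longWords (L : Set (List Bool)) (i : List Bool) : Set (List Bool) :=
  {x ∈ L | i.length ≤ x.length}

theorem regular_univ {A : Type} : Regular (Set.univ : Set (List A)) :=
  ⟨Unit, inferInstance, fun _ _ => (), (), Set.univ, rfl⟩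

theorem isAutomaticFamily_longWords {L : Set (List Bool)} (hL : Regular L) :
    IsAutomaticFamily Set.univ (longWords L) := by
  refine ⟨regular_univ, ?_⟩
  obtain ⟨S, _, f, s₀, F, rfl⟩ := hL
  refine ⟨Option (S × Bool), inferInstance, convStep f, some (s₀, false),
    {q | ∃ p : S × Bool, q = some p ∧ p.1 ∈ F}, ?_⟩
  ext c
  constructor
  · rintro ⟨i, -, x, ⟨hxF, hlen⟩, rfl⟩
    obtain ⟨b, hb⟩ := act_convStep_conv f hlen s₀
    exact ⟨_, hb, hxF⟩
  · rintro ⟨⟨t, b⟩, hc, htF⟩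
    obtain ⟨x, i, hlen, -, rfl, rfl⟩ := eq_conv_of_act_convStep f hc
    exact ⟨i, trivial, x, ⟨htF, hlen⟩, rfl⟩

section Cylinders

theorem isPrefixOfSeq_iff (w : List Bool) (X : ℕ → Bool) :
    IsPrefixOfSeq w X ↔ (List.range w.length).map X = w := by
  refine ⟨fun h => List.ext_getElem (by simp) fun k _ hk => ?_, fun h k hk => ?_⟩
  · simp [h k hk, hk]
  · rw [← h]
    simp [hk]

theorem mem_cyl_iff (L : Set (List Bool)) (X : ℕ → Bool) :
    X ∈ cyl L ↔ ∃ m, (List.range m).map X ∈ L := by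
  simp only [cyl, isPrefixOfSeq_iff, Set.mem_ofPred_eq]
  exact ⟨fun ⟨w, hw, h⟩ => ⟨w.length, by rwa [h]⟩, fun ⟨m, hm⟩ => ⟨_, hm, by simp⟩⟩

variable {S : Type*} (f : S → Bool → S) (s₀ : S) (F : Set S)

theorem run_eq_act (X : ℕ → Bool) (m : ℕ) :
    run f s₀ X m = act f s₀ ((List.range m).map X) := by
  induction m with
  | zero => rfl
  | succ m ih => simp [run, ih, act, List.range_succ]

def visitsAfter (n : ℕ) : Set (ℕ → Bool) :=
  {X | ∃ m, n ≤ m ∧ run f s₀ X m ∈ F}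

theorem cyl_longWords (i : List Bool) :
    cyl (longWords {x | act f s₀ x ∈ F} i) = visitsAfter f s₀ F i.length := by
  ext X
  simp [mem_cyl_iff, longWords, visitsAfter, run_eq_act, and_comm]

theorem antitone_visitsAfter : Antitone (visitsAfter f s₀ F) :=
  fun _ _ hab _ ⟨m, hm, hF⟩ => ⟨m, hab.trans hm, hF⟩

theorem iInter_visitsAfter : ⋂ n, visitsAfter f s₀ F n = {X | BuchiAccepts f s₀ F X} := by
  ext X
  simp [visitsAfter, BuchiAccepts, frequently_atTop]

theorem measurable_run [MeasurableSpace S] [MeasurableSingletonClass S] [Countable S] (m : ℕ) :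
    Measurable fun X => run f s₀ X m := by
  induction m with
  | zero => exact measurable_const
  | succ m ih =>
    exact (measurable_of_countable (Function.uncurry f)).comp (ih.prodMk (measurable_pi_apply m))

theorem measurableSet_visitsAfter [Countable S] (n : ℕ) :
    MeasurableSet (visitsAfter f s₀ F n) := by
  let _ : MeasurableSpace S := ⊤
  have hrun (m : ℕ) : MeasurableSet {X | run f s₀ X m ∈ F} :=
    measurable_run f s₀ m MeasurableSpace.measurableSet_top
  simpa only [visitsAfter, Set.ofPred_exists, Set.ofPred_and] using
    MeasurableSet.iUnion fun m => (MeasurableSet.const (n ≤ m)).inter (hrun m)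

theorem tendsto_measure_visitsAfter [Countable S] (μ : Measure (ℕ → Bool)) [IsFiniteMeasure μ] :
    Tendsto (fun n => μ (visitsAfter f s₀ F n)) atTop (nhds (μ {X | BuchiAccepts f s₀ F X})) := by
  rw [← iInter_visitsAfter]
  exact tendsto_measure_iInter_atTop
    (fun n => (measurableSet_visitsAfter f s₀ F n).nullMeasurableSet)
    (antitone_visitsAfter f s₀ F) ⟨0, measure_ne_top μ _⟩

end Cylinders

instance isFiniteMeasure_mu : IsFiniteMeasure mu := by
  unfold mu
  infer_instance

theorem list_length_surjective {α : Type*} [Inhabited α] :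
    Function.Surjective (List.length : List α → ℕ) :=
  fun n => ⟨List.replicate n default, List.length_replicate⟩

/-- For every deterministic Büchi automaton of measure zero, there is
an ART whose covering region equals its language. -/
theorem stmt11 {S : Type} [Fintype S] (f : S → Bool → S) (s₀ : S) (F : Set S)
    (h : mu {Y : ℕ → Bool | BuchiAccepts f s₀ F Y} = 0) :
    ∃ (I : Set (List Bool)) (U : List Bool → Set (List Bool)),
      IsART I U ∧ coverRegion I U = {Y : ℕ → Bool | BuchiAccepts f s₀ F Y} := by
  have hL : Regular {x | act f s₀ x ∈ F} := ⟨S, inferInstance, f, s₀, F, rfl⟩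
  refine ⟨Set.univ, longWords {x | act f s₀ x ∈ F}, ⟨isAutomaticFamily_longWords hL, ?_⟩, ?_⟩
  · intro ε hε
    have hlim := tendsto_measure_visitsAfter f s₀ F mu
    rw [h] at hlim
    obtain ⟨n, hn⟩ := (hlim.eventually_lt_const hε).exists
    refine ⟨List.replicate n false, trivial, ?_⟩
    rw [cyl_longWords, List.length_replicate]
    exact hn.le
  · simp only [coverRegion, Set.mem_univ, Set.iInter_true, cyl_longWords]
    rw [list_length_surjective.iInter_comp (visitsAfter f s₀ F), iInter_visitsAfter]
end
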